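/- If rpl(T_i) ≥ rpl(T_{i+1}) ≥ 2 and T_i can be derived from T_{i+1} by deleting a leaf and appending a leaf, then C(T_i, rpl(T_{i+1})) can be derived from C(T_{i+1}, rpl(T_{i+1})) by deleting a leaf and appending a leaf. -/
import Mathlib


/-- An ordered (plane) tree: a root together with the list of subtrees of its
children.  The children are listed **rightmost first** (so the head of the
list is the rightmost child). -/
inductive OTree : Type
  | node : List OTree → OTree

namespace OTree

-- Number of vertices of an ordered tree.
mutual
  def size : OTree → ℕ
    | .node ts => 1 + sizeAux ts
  def sizeAux : List OTree → ℕ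
    | [] => 0
    | t :: ts => size t + sizeAux ts
end

/-- `rpl T` is the number of edges of the rightmost path of `T`
(the path from the root that always follows the rightmost child). -/
def rpl : OTree → ℕ
  | .node [] => 0
  | .node (t :: _) => 1 + rpl t

/-- `p T` removes the rightmost leaf of `T` (the endpoint of the rightmost
path).  On the one-vertex tree it is the identity (junk value). -/
def p : OTree → OTree
  | .node [] => .node []
  | .node (.node [] :: ts) => .node ts
  | .node (.node (c :: cs) :: ts) => .node (p (.node (c :: cs)) :: ts)

/-- `C T i` appends a new leaf as the rightmost child of the vertex at
level `i` on the rightmost path of `T` (the root has level 1).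
Junk values are returned when `i = 0` or `i` exceeds `rpl T + 1`. -/
def C : OTree → ℕ → OTree
  | t, 0 => t
  | .node ts, 1 => .node (.node [] :: ts)
  | .node [], _ + 2 => .node []
  | .node (t :: ts), n + 2 => .node (C t (n + 1) :: ts)

/-- The number of children of the parent of the rightmost leaf
(junk value `0` on the one-vertex tree, which has no such parent). -/
def rmlParentDeg : OTree → ℕ
  | .node [] => 0
  | .node (.node [] :: ts) => ts.length + 1
  | .node (.node (c :: cs) :: _) => rmlParentDeg (.node (c :: cs))

/-- `T` has the pony-tail if the rightmost child of the root has exactly one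
child, which is a leaf. -/
def ponyTail : OTree → Prop
  | .node (.node [.node []] :: _) => True
  | _ => False

end OTree

/-- `AppendLeaf T T'` holds when `T'` is obtained from `T` by attaching one
new leaf to some vertex of `T`, at some position among its children. -/
inductive AppendLeaf : OTree → OTree → Prop
  | root (l r : List OTree) :
      AppendLeaf (.node (l ++ r)) (.node (l ++ OTree.node [] :: r))
  | child (l r : List OTree) (t t' : OTree) :
      AppendLeaf t t' → AppendLeaf (.node (l ++ t :: r)) (.node (l ++ t' :: r))

/-- `DelApp T T'` holds when `T'` can be obtained from `T` by deleting one
leaf and then appending one new leaf somewhere (delete-and-append a leaf). -/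
def DelApp (T T' : OTree) : Prop :=
  ∃ S : OTree, AppendLeaf S T ∧ AppendLeaf S T'

/-- `CopyingAt T T' j` : `T` is copying `T'` at level `j`, i.e. `T'` is
obtained from `T` by appending a new leaf which becomes the rightmost leaf of
`T'` (namely forming `C T j`, whose rightmost path has `j` edges) and then
removing some other leaf. -/
def CopyingAt (T T' : OTree) (j : ℕ) : Prop :=
  T ≠ T' ∧ 1 ≤ j ∧ j ≤ T.rpl + 1 ∧ T'.rpl = j ∧ AppendLeaf T' (T.C j)

/-- `T` is copying `T'`. -/
def Copying (T T' : OTree) : Prop := ∃ j : ℕ, CopyingAt T T' j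


theorem appendLeaf_C {S T : OTree} (h : AppendLeaf S T) :
    ∀ j, 1 ≤ j → j ≤ T.rpl → AppendLeaf (S.C j) (T.C j) := by
  induction h with
  | root l r =>
    intro j hj1 hj2
    match j with
    | 1 =>
      have := AppendLeaf.root (OTree.node [] :: l) r
      simpa [OTree.C] using this
    | n + 2 =>
      match l with
      | [] => simp [OTree.rpl] at hj2
      | t :: l' =>
        have := AppendLeaf.root (t.C (n+1) :: l') r
        simpa [OTree.C] using this
  | child l r t t' ht ih =>
    intro j hj1 hj2
    match j with
    | 1 =>
      have := AppendLeaf.child (OTree.node [] :: l) r t t' ht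
      simpa [OTree.C] using this
    | n + 2 =>
      match l with
      | [] =>
        have hrt : n + 1 ≤ t'.rpl := by simp [OTree.rpl] at hj2; omega
        have := AppendLeaf.child ([] : List OTree) r (t.C (n+1)) (t'.C (n+1))
          (ih (n+1) (by omega) hrt)
        simpa [OTree.C] using this
      | u :: l' =>
        have := AppendLeaf.child (u.C (n+1) :: l') r t t' ht
        simpa [OTree.C] using this

/-- If `rpl T₁ ≥ rpl T₂ ≥ 2` and `T₁` can be derived from `T₂` by deleting a
leaf and appending a leaf, then `C T₁ (rpl T₂)` can be derived from
`C T₂ (rpl T₂)` by deleting a leaf and appending a leaf. -/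
theorem stmt_12 (T₁ T₂ : OTree) (h2 : 2 ≤ T₂.rpl) (h12 : T₂.rpl ≤ T₁.rpl)
    (h : DelApp T₂ T₁) :
    DelApp (T₂.C T₂.rpl) (T₁.C T₂.rpl) := by
  obtain ⟨S, hS2, hS1⟩ := h
  exact ⟨S.C T₂.rpl, appendLeaf_C hS2 _ (by omega) le_rfl,
         appendLeaf_C hS1 _ (by omega) h12⟩
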